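/- The ℤ-linear map T : ℤ⁸ → ℂ⁶ sending the j-th standard basis vector eⱼ to λⱼ′ (for j = 1,…,8) has kernel exactly the subgroup ℤ·(e₄ − e₆) + ℤ·(e₅ − e₇), which is free of rank 2. -/
import Mathlib


open Complex

/-- The sixth root of unity `ω = e^{πi/3} = (1 + i√3)/2`. -/
noncomputable def ω : ℂ := (1 + Real.sqrt 3 * I) / 2

/-- The images `λ₁′, …, λ₈′` of the generators of `K₀(A_θ ⋊ ℤ₃)` under `𝐓₆ ∘ κ⋆`. -/
noncomputable def lam' (θ : ℝ) : Fin 8 → Fin 6 → ℂ :=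
  ![![1, 0, 0, 0, 0, 0],
    ![1/3, 0, 1/3, 1/3, 0, 0],
    ![1/3, 0, -ω/3, -ω/3, 0, 0],
    ![1/3, 0, 0, 1/3, 0, 0],
    ![1/3, 0, 0, -ω/3, 0, 0],
    ![1/3, 0, 0, 1/3, 0, 0],
    ![1/3, 0, 0, -ω/3, 0, 0],
    ![(θ : ℂ)/3, 0, (1 + ω)/9, (1 + ω)/3, 0, 0]]


lemma omega_im : ω.im = Real.sqrt 3 / 2 := by simp [ω]

/-- From `(a:ℂ) = b * ω` with integers, deduce `a = b = 0`. -/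
lemma int_eq_mul_omega {a b : ℤ} (h : (a:ℂ) = (b:ℂ) * ω) : a = 0 ∧ b = 0 := by
  have him := congrArg Complex.im h
  simp [omega_im] at him
  subst him
  simp at h
  exact ⟨by exact_mod_cast h, rfl⟩

/-- The ℤ-linear map `T : ℤ⁸ → ℂ⁶` sending the `j`-th standard basis
vector to `λⱼ′` has kernel exactly `ℤ·(e₄ - e₆) + ℤ·(e₅ - e₇)`, which is free of
rank 2. -/
theorem ker_kappa_eq_span (θ : ℝ) (hθ : Irrational θ)
    (T : (Fin 8 → ℤ) →ₗ[ℤ] (Fin 6 → ℂ))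
    (hT : ∀ j : Fin 8, T (Pi.single j 1) = lam' θ j) :
    LinearMap.ker T
      = Submodule.span ℤ
          ({Pi.single 3 1 - Pi.single 5 1, Pi.single 4 1 - Pi.single 6 1} :
            Set (Fin 8 → ℤ)) ∧
    Module.Free ℤ (LinearMap.ker T) ∧
    Module.finrank ℤ (LinearMap.ker T) = 2 := by
  set v1 : Fin 8 → ℤ := Pi.single 3 1 - Pi.single 5 1 with hv1
  set v2 : Fin 8 → ℤ := Pi.single 4 1 - Pi.single 6 1 with hv2
  have hTn : ∀ n : Fin 8 → ℤ, T n = ∑ j : Fin 8, n j • lam' θ j := by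
    intro n
    have hn : n = ∑ j : Fin 8, n j • Pi.single j (1:ℤ) := by
      ext k
      simp [Pi.single_apply, Finset.sum_apply]
    conv_lhs => rw [hn]
    rw [map_sum]; simp only [map_smul, hT]
  have hker : LinearMap.ker T = Submodule.span ℤ ({v1, v2} : Set (Fin 8 → ℤ)) := by
    apply le_antisymm
    · intro n hn
      have h : T n = 0 := hn
      rw [hTn] at h
      have h0 := congrFun h 0
      have h2 := congrFun h 2
      have h3 := congrFun h 3
      simp only [Fin.sum_univ_eight, Finset.sum_apply, Pi.smul_apply, Pi.zero_apply,
        zsmul_eq_mul, Pi.mul_apply, Pi.intCast_apply,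
        show lam' θ 0 (0:Fin 6) = 1 from rfl,
        show lam' θ 1 (0:Fin 6) = 1/3 from rfl,
        show lam' θ 2 (0:Fin 6) = 1/3 from rfl,
        show lam' θ 3 (0:Fin 6) = 1/3 from rfl,
        show lam' θ 4 (0:Fin 6) = 1/3 from rfl,
        show lam' θ 5 (0:Fin 6) = 1/3 from rfl,
        show lam' θ 6 (0:Fin 6) = 1/3 from rfl,
        show lam' θ 7 (0:Fin 6) = (θ:ℂ)/3 from rfl,
        show lam' θ 0 (2:Fin 6) = 0 from rfl,
        show lam' θ 1 (2:Fin 6) = 1/3 from rfl,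
        show lam' θ 2 (2:Fin 6) = -ω/3 from rfl,
        show lam' θ 3 (2:Fin 6) = 0 from rfl,
        show lam' θ 4 (2:Fin 6) = 0 from rfl,
        show lam' θ 5 (2:Fin 6) = 0 from rfl,
        show lam' θ 6 (2:Fin 6) = 0 from rfl,
        show lam' θ 7 (2:Fin 6) = (1+ω)/9 from rfl,
        show lam' θ 0 (3:Fin 6) = 0 from rfl,
        show lam' θ 1 (3:Fin 6) = 1/3 from rfl,
        show lam' θ 2 (3:Fin 6) = -ω/3 from rfl,
        show lam' θ 3 (3:Fin 6) = 1/3 from rfl,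
        show lam' θ 4 (3:Fin 6) = -ω/3 from rfl,
        show lam' θ 5 (3:Fin 6) = 1/3 from rfl,
        show lam' θ 6 (3:Fin 6) = -ω/3 from rfl,
        show lam' θ 7 (3:Fin 6) = (1+ω)/3 from rfl] at h0 h2 h3
      -- n 7 = 0 from irrationality
      have hc : (θ:ℂ) * (n 7) =
          ((-(3*(n 0) + n 1 + n 2 + n 3 + n 4 + n 5 + n 6) : ℤ) : ℂ) := by
        push_cast
        linear_combination 3*h0
      have hr : θ * ((n 7 : ℤ):ℝ) =
          ((-(3*(n 0) + n 1 + n 2 + n 3 + n 4 + n 5 + n 6) : ℤ) : ℝ) := by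
        exact_mod_cast hc
      have hn7 : n 7 = 0 := by
        by_contra h7
        apply hθ
        refine ⟨((-(3*(n 0) + n 1 + n 2 + n 3 + n 4 + n 5 + n 6) : ℤ) : ℚ) / ((n 7 : ℤ) : ℚ), ?_⟩
        have hn7R : ((n 7:ℤ):ℝ) ≠ 0 := by exact_mod_cast h7
        push_cast
        rw [div_eq_iff hn7R]
        push_cast at hr
        linarith [hr]
      have c7 : ((n 7 : ℤ) : ℂ) = 0 := by rw [hn7]; norm_num
      -- n 1 = n 2 = 0
      have e12 : ((n 1 : ℤ):ℂ) = ((n 2 : ℤ):ℂ) * ω := by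
        linear_combination 3*h2 - ((1+ω)/3) * c7
      obtain ⟨hn1, hn2⟩ := int_eq_mul_omega e12
      have c1 : ((n 1 : ℤ) : ℂ) = 0 := by rw [hn1]; norm_num
      have c2 : ((n 2 : ℤ) : ℂ) = 0 := by rw [hn2]; norm_num
      -- n 3 + n 5 = 0 and n 4 + n 6 = 0
      have e3 : ((n 3 + n 5 : ℤ) : ℂ) = ((n 4 + n 6 : ℤ):ℂ) * ω := by
        push_cast
        linear_combination 3*h3 - c1 + ω * c2 - (1+ω) * c7
      obtain ⟨e35, e46⟩ := int_eq_mul_omega e3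
      have c35 : ((n 3 : ℤ):ℂ) + ((n 5 : ℤ):ℂ) = 0 := by exact_mod_cast e35
      have c46 : ((n 4 : ℤ):ℂ) + ((n 6 : ℤ):ℂ) = 0 := by exact_mod_cast e46
      -- n 0 = 0
      have c0 : ((n 0 : ℤ) : ℂ) = 0 := by
        linear_combination h0 - (1/3)*c1 - (1/3)*c2 - (1/3)*c35 - (1/3)*c46 - ((θ:ℂ)/3)*c7
      have hn0 : n 0 = 0 := by exact_mod_cast c0
      -- conclude membership
      rw [Submodule.mem_span_pair]
      refine ⟨n 3, n 4, ?_⟩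
      have e5 : n 5 = -(n 3) := by omega
      have e6 : n 6 = -(n 4) := by omega
      funext k
      fin_cases k <;>
        simp [hv1, hv2, Pi.single_apply, hn0, hn1, hn2, hn7, e5, e6]
    · rw [Submodule.span_le]
      rintro x hx
      have e35' : lam' θ 3 = lam' θ 5 := rfl
      have e46' : lam' θ 4 = lam' θ 6 := rfl
      rcases hx with rfl | rfl <;>
        simp [LinearMap.mem_ker, hv1, hv2, map_sub, hT, e35', e46']
  refine ⟨hker, inferInstance, ?_⟩
  have hb : LinearIndependent ℤ ![v1, v2] := by
    rw [Fintype.linearIndependent_iff]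
    intro g hg
    simp only [Fin.sum_univ_two, Matrix.cons_val_zero, Matrix.cons_val_one, Matrix.head_cons] at hg
    have h3 := congrFun hg 3
    have h4 := congrFun hg 4
    simp [hv1, hv2, Pi.single_apply] at h3 h4
    intro i
    fin_cases i <;> simpa using by omega
  have hrange : ({v1, v2} : Set (Fin 8 → ℤ)) = Set.range ![v1, v2] := by
    ext x
    simp [Fin.exists_fin_two, or_comm]
  rw [hker, hrange, finrank_span_eq_card hb, Fintype.card_fin]
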